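/- Let (Σ, ∂) be a differential field with constants C of characteristic zero and L ∈ Σ[∂] monic of order n. Any finite family {G_k} of differential operators in Z(L) \ C[L] whose orders are pairwise incongruent modulo n is linearly independent over C[L]. -/
import Mathlib


open scoped Classical
noncomputable section

variable {R : Type} [Ring R]

/-- Left multiplication by `a` as an additive endomorphism of `R`. -/
def mulOp (a : R) : AddMonoid.End R := AddMonoidHom.mulLeft a

/-- The derivation as an additive endomorphism. -/
def derOp (d : R →+ R) : AddMonoid.End R := d

/-- `d` satisfies the Leibniz rule. -/
def IsDeriv (d : R →+ R) : Prop := ∀ a b : R, d (a * b) = d a * b + a * d b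

/-- Additive group of differential operators of order at most `n`:
sums of terms `a · ∂^i` with `i ≤ n`. -/
def OpLE (d : R →+ R) (n : ℕ) : AddSubgroup (AddMonoid.End R) :=
  AddSubgroup.closure {P | ∃ (a : R) (i : ℕ), i ≤ n ∧ P = mulOp a * derOp d ^ i}

/-- `L` is a differential operator. -/
def IsOp (d : R →+ R) (L : AddMonoid.End R) : Prop := ∃ n, L ∈ OpLE d n

/-- `L` is a differential operator of exact order `n`. -/
def HasOrd (d : R →+ R) (L : AddMonoid.End R) (n : ℕ) : Prop :=
  L ∈ OpLE d n ∧ ∀ k, L ∈ OpLE d k → n ≤ k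

/-- `L` is a monic differential operator of order `n`. -/
def MonicOrd (d : R →+ R) (L : AddMonoid.End R) (n : ℕ) : Prop :=
  HasOrd d L n ∧ L - derOp d ^ n ∈ OpLE d (n - 1)

/-- The centralizer of `L` in the ring of differential operators. -/
def Cent (d : R →+ R) (L : AddMonoid.End R) : Set (AddMonoid.End R) :=
  {A | IsOp d A ∧ L * A = A * L}

/-- Polynomials in `L` with constant coefficients. -/
def CPoly (d : R →+ R) (L : AddMonoid.End R) : Set (AddMonoid.End R) :=
  {P | ∃ p : Polynomial R, (∀ k, d (p.coeff k) = 0) ∧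
      P = ∑ i ∈ Finset.range (p.natDegree + 1), mulOp (p.coeff i) * L ^ i}

/-- The level of `L`: smallest order of an element of `Z(L) \ C[L]`. -/
def Level (d : R →+ R) (L : AddMonoid.End R) (M : ℕ) : Prop :=
  (∃ Q ∈ Cent d L, Q ∉ CPoly d L ∧ HasOrd d Q M) ∧
  ∀ Q ∈ Cent d L, Q ∉ CPoly d L → ∀ q, HasOrd d Q q → M ≤ q

section Aux

variable {F : Type} [Field F]

lemma mulOp_apply (a x : F) : mulOp a x = a * x := rfl

lemma mulOp_zero : (mulOp (0:F)) = 0 := by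
  apply AddMonoidHom.ext; intro x
  show (0:F) * x = 0
  ring

lemma mulOp_add (a b : F) : mulOp (a+b) = mulOp a + mulOp b := by
  apply AddMonoidHom.ext; intro x
  show (a+b) * x = a * x + b * x
  ring

lemma mulOp_neg (a : F) : mulOp (-a) = - mulOp a := by
  apply AddMonoidHom.ext; intro x
  show (-a) * x = -(a * x)
  ring

lemma mulOp_mul (a b : F) : mulOp (a*b) = mulOp a * mulOp b := by
  apply AddMonoidHom.ext; intro x
  show (a*b) * x = a * (b * x)
  ring

lemma mulOp_one : mulOp (1:F) = 1 := by
  apply AddMonoidHom.ext; intro x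
  show (1:F) * x = x
  ring

lemma mulOp_comm (a b : F) : mulOp a * mulOp b = mulOp b * mulOp a := by
  rw [← mulOp_mul, ← mulOp_mul, mul_comm]

lemma derOp_apply (d : F →+ F) (x : F) : derOp d x = d x := rfl

lemma der_mulOp (d : F →+ F) (hd : IsDeriv d) (a : F) :
    derOp d * mulOp a = mulOp (d a) + mulOp a * derOp d := by
  apply AddMonoidHom.ext; intro x
  show d (a * x) = d a * x + a * d x
  exact hd a x


lemma End_mul_neg (P Q : AddMonoid.End F) : P * -Q = -(P * Q) := by
  apply AddMonoidHom.ext; intro y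
  exact P.map_neg (Q y)

lemma End_neg_mul (P Q : AddMonoid.End F) : (-P) * Q = -(P * Q) := by
  apply AddMonoidHom.ext; intro y
  rfl

lemma End_mul_sub (P Q R : AddMonoid.End F) : P * (Q - R) = P * Q - P * R := by
  apply AddMonoidHom.ext; intro y
  exact P.map_sub (Q y) (R y)

lemma End_sub_mul (P Q R : AddMonoid.End F) : (P - Q) * R = P * R - Q * R := by
  apply AddMonoidHom.ext; intro y
  rfl

/-- Operators of order strictly less than `n`. -/
def OpLT (d : F →+ F) (n : ℕ) : AddSubgroup (AddMonoid.End F) :=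
  AddSubgroup.closure {P | ∃ (a : F) (i : ℕ), i < n ∧ P = mulOp a * derOp d ^ i}

variable {d : F →+ F}

lemma OpLT_zero : OpLT d 0 = ⊥ := by
  rw [OpLT, show {P | ∃ (a : F) (i : ℕ), i < 0 ∧ P = mulOp a * derOp d ^ i} = (∅ : Set (AddMonoid.End F)) by
    ext P; simp]
  exact AddSubgroup.closure_empty

lemma OpLT_succ (m : ℕ) : OpLT d (m+1) = OpLE d m := by
  unfold OpLT OpLE
  congr 1
  ext P
  simp [Nat.lt_succ_iff]

lemma OpLE_mono {m m' : ℕ} (h : m ≤ m') : OpLE d m ≤ OpLE d m' := by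
  apply AddSubgroup.closure_mono
  rintro P ⟨a, i, hi, rfl⟩
  exact ⟨a, i, hi.trans h, rfl⟩

lemma OpLT_mono {m m' : ℕ} (h : m ≤ m') : OpLT d m ≤ OpLT d m' := by
  apply AddSubgroup.closure_mono
  rintro P ⟨a, i, hi, rfl⟩
  exact ⟨a, i, hi.trans_le h, rfl⟩

lemma OpLT_le_OpLE (m : ℕ) : OpLT d m ≤ OpLE d m := by
  apply AddSubgroup.closure_mono
  rintro P ⟨a, i, hi, rfl⟩
  exact ⟨a, i, hi.le, rfl⟩

lemma mem_OpLE_of_le {a : F} {i m : ℕ} (h : i ≤ m) : mulOp a * derOp d ^ i ∈ OpLE d m :=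
  AddSubgroup.subset_closure ⟨a, i, h, rfl⟩

lemma mem_OpLT_of_lt {a : F} {i m : ℕ} (h : i < m) : mulOp a * derOp d ^ i ∈ OpLT d m :=
  AddSubgroup.subset_closure ⟨a, i, h, rfl⟩

lemma pow_mem_OpLE {i m : ℕ} (h : i ≤ m) : derOp d ^ i ∈ OpLE d m := by
  have := mem_OpLE_of_le (d := d) (a := (1:F)) h
  rwa [mulOp_one, one_mul] at this

lemma mulOp_mul_mem_le (a : F) {m : ℕ} {P : AddMonoid.End F} (h : P ∈ OpLE d m) :
    mulOp a * P ∈ OpLE d m := by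
  refine AddSubgroup.closure_induction (fun x hx => ?_) ?_ (fun x y _ _ hx hy => ?_)
    (fun x _ hx => ?_) h
  · obtain ⟨b, i, hi, rfl⟩ := hx
    rw [← mul_assoc, ← mulOp_mul]
    exact mem_OpLE_of_le hi
  · rw [mul_zero]; exact zero_mem _
  · rw [mul_add]; exact add_mem hx hy
  · rw [End_mul_neg]; exact neg_mem hx

lemma mulOp_mul_mem_lt (a : F) {m : ℕ} {P : AddMonoid.End F} (h : P ∈ OpLT d m) :
    mulOp a * P ∈ OpLT d m := by
  refine AddSubgroup.closure_induction (fun x hx => ?_) ?_ (fun x y _ _ hx hy => ?_)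
    (fun x _ hx => ?_) h
  · obtain ⟨b, i, hi, rfl⟩ := hx
    rw [← mul_assoc, ← mulOp_mul]
    exact mem_OpLT_of_lt hi
  · rw [mul_zero]; exact zero_mem _
  · rw [mul_add]; exact add_mem hx hy
  · rw [End_mul_neg]; exact neg_mem hx

lemma der_mul_mem_le (hd : IsDeriv d) {m : ℕ} {P : AddMonoid.End F} (h : P ∈ OpLE d m) :
    derOp d * P ∈ OpLE d (m+1) := by
  refine AddSubgroup.closure_induction (fun x hx => ?_) ?_ (fun x y _ _ hx hy => ?_)
    (fun x _ hx => ?_) h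
  · obtain ⟨b, i, hi, rfl⟩ := hx
    rw [← mul_assoc, der_mulOp d hd b, add_mul, mul_assoc, ← pow_succ']
    exact add_mem (mem_OpLE_of_le (hi.trans (Nat.le_succ m)))
      (mem_OpLE_of_le (Nat.succ_le_succ hi))
  · rw [mul_zero]; exact zero_mem _
  · rw [mul_add]; exact add_mem hx hy
  · rw [End_mul_neg]; exact neg_mem hx

lemma der_mul_mem_lt (hd : IsDeriv d) {m : ℕ} {P : AddMonoid.End F} (h : P ∈ OpLT d m) :
    derOp d * P ∈ OpLT d (m+1) := by
  refine AddSubgroup.closure_induction (fun x hx => ?_) ?_ (fun x y _ _ hx hy => ?_)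
    (fun x _ hx => ?_) h
  · obtain ⟨b, i, hi, rfl⟩ := hx
    rw [← mul_assoc, der_mulOp d hd b, add_mul, mul_assoc, ← pow_succ']
    exact add_mem (mem_OpLT_of_lt (hi.trans (Nat.lt_succ_self m)))
      (mem_OpLT_of_lt (Nat.succ_lt_succ hi))
  · rw [mul_zero]; exact zero_mem _
  · rw [mul_add]; exact add_mem hx hy
  · rw [End_mul_neg]; exact neg_mem hx

lemma pow_mul_mem_le (hd : IsDeriv d) (j : ℕ) {m : ℕ} {P : AddMonoid.End F}
    (h : P ∈ OpLE d m) : derOp d ^ j * P ∈ OpLE d (m + j) := by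
  induction j with
  | zero => rw [pow_zero, one_mul]; exact h
  | succ j ih =>
    rw [pow_succ', mul_assoc]
    exact der_mul_mem_le hd ih

lemma mul_mem_le (hd : IsDeriv d) {p q : ℕ} {P Q : AddMonoid.End F}
    (hP : P ∈ OpLE d p) (hQ : Q ∈ OpLE d q) : P * Q ∈ OpLE d (p + q) := by
  refine AddSubgroup.closure_induction (fun x hx => ?_) ?_ (fun x y _ _ hx hy => ?_)
    (fun x _ hx => ?_) hP
  · obtain ⟨b, i, hi, rfl⟩ := hx
    rw [mul_assoc]
    apply mulOp_mul_mem_le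
    have := pow_mul_mem_le hd i hQ
    exact OpLE_mono (by omega) this
  · rw [zero_mul]; exact zero_mem _
  · rw [add_mul]; exact add_mem hx hy
  · rw [End_neg_mul]; exact neg_mem hx

lemma mul_mem_lt_left (hd : IsDeriv d) {p q : ℕ} {P Q : AddMonoid.End F}
    (hP : P ∈ OpLT d p) (hQ : Q ∈ OpLE d q) : P * Q ∈ OpLT d (p + q) := by
  cases p with
  | zero =>
    rw [OpLT_zero, AddSubgroup.mem_bot] at hP
    rw [hP, zero_mul]; exact zero_mem _
  | succ p' =>
    rw [OpLT_succ] at hP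
    have := mul_mem_le hd hP hQ
    rw [show p' + 1 + q = (p' + q) + 1 by omega, OpLT_succ]
    exact this

lemma mul_mem_lt_right (hd : IsDeriv d) {p q : ℕ} {P Q : AddMonoid.End F}
    (hP : P ∈ OpLE d p) (hQ : Q ∈ OpLT d q) : P * Q ∈ OpLT d (p + q) := by
  cases q with
  | zero =>
    rw [OpLT_zero, AddSubgroup.mem_bot] at hQ
    rw [hQ, mul_zero]; exact zero_mem _
  | succ q' =>
    rw [OpLT_succ] at hQ
    have := mul_mem_le hd hP hQ
    rw [show p + (q' + 1) = (p + q') + 1 by omega, OpLT_succ]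
    exact this

end Aux
section Aux2

variable {F : Type} [Field F] {d : F →+ F}

lemma pow_comm_mulOp (hd : IsDeriv d) (b : F) :
    ∀ i, derOp d ^ i * mulOp b - mulOp b * derOp d ^ i ∈ OpLT d i := by
  intro i
  induction i with
  | zero => rw [pow_zero, one_mul, mul_one, sub_self]; exact zero_mem _
  | succ i ih =>
    have key : derOp d ^ (i+1) * mulOp b - mulOp b * derOp d ^ (i+1)
        = derOp d * (derOp d ^ i * mulOp b - mulOp b * derOp d ^ i)
          + mulOp (d b) * derOp d ^ i := by
      rw [End_mul_sub]
      rw [show derOp d * (derOp d ^ i * mulOp b) = derOp d ^ (i+1) * mulOp b by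
        rw [← mul_assoc, ← pow_succ']]
      rw [show derOp d * (mulOp b * derOp d ^ i)
          = mulOp (d b) * derOp d ^ i + mulOp b * derOp d ^ (i+1) by
        rw [← mul_assoc, der_mulOp d hd b, add_mul, mul_assoc, ← pow_succ']]
      abel
    rw [key]
    exact add_mem (der_mul_mem_lt hd ih) (mem_OpLT_of_lt (Nat.lt_succ_self i))

lemma exists_rep_lt {m : ℕ} {P : AddMonoid.End F} (h : P ∈ OpLT d m) :
    ∃ f : ℕ → F, P = ∑ i ∈ Finset.range m, mulOp (f i) * derOp d ^ i := by
  refine AddSubgroup.closure_induction (fun x hx => ?_) ?_ (fun x y _ _ hx hy => ?_)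
    (fun x _ hx => ?_) h
  · obtain ⟨a, i, hi, rfl⟩ := hx
    refine ⟨fun j => if j = i then a else 0, ?_⟩
    rw [Finset.sum_eq_single i]
    · simp
    · intro j _ hj; simp [if_neg hj, mulOp_zero]
    · intro hmem; exact absurd (Finset.mem_range.2 hi) hmem
  · exact ⟨fun _ => 0, by simp [mulOp_zero]⟩
  · obtain ⟨f, rfl⟩ := hx; obtain ⟨g, rfl⟩ := hy
    refine ⟨fun j => f j + g j, ?_⟩
    rw [← Finset.sum_add_distrib]
    exact Finset.sum_congr rfl fun j _ => by rw [mulOp_add, add_mul]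
  · obtain ⟨f, rfl⟩ := hx
    refine ⟨fun j => -f j, ?_⟩
    rw [← Finset.sum_neg_distrib]
    exact Finset.sum_congr rfl fun j _ => by rw [mulOp_neg, End_neg_mul]

lemma exists_rep_le {m : ℕ} {P : AddMonoid.End F} (h : P ∈ OpLE d m) :
    ∃ f : ℕ → F, P = ∑ i ∈ Finset.range (m+1), mulOp (f i) * derOp d ^ i := by
  rw [← OpLT_succ] at h; exact exists_rep_lt h

lemma K_lemma (hd : IsDeriv d) (x : F) :
    ∀ i, derOp d ^ (i+1) * mulOp x - mulOp x * derOp d ^ (i+1)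
      - mulOp (((i+1 : ℕ) : F) * d x) * derOp d ^ i ∈ OpLT d i := by
  intro i
  induction i with
  | zero =>
    have : derOp d ^ (0+1) * mulOp x - mulOp x * derOp d ^ (0+1)
        - mulOp (((0+1 : ℕ) : F) * d x) * derOp d ^ 0 = 0 := by
      rw [pow_one, pow_zero, mul_one, der_mulOp d hd x]
      norm_num
    rw [this]; exact zero_mem _
  | succ i ih =>
    have key : derOp d ^ (i+1+1) * mulOp x - mulOp x * derOp d ^ (i+1+1)
        - mulOp (((i+1+1 : ℕ) : F) * d x) * derOp d ^ (i+1)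
        = derOp d * (derOp d ^ (i+1) * mulOp x - mulOp x * derOp d ^ (i+1)
            - mulOp (((i+1 : ℕ) : F) * d x) * derOp d ^ i)
          + mulOp (d (((i+1 : ℕ) : F) * d x)) * derOp d ^ i := by
      have e1 : derOp d * (derOp d ^ (i+1) * mulOp x) = derOp d ^ (i+1+1) * mulOp x := by
        rw [← mul_assoc, ← pow_succ']
      have e2 : derOp d * (mulOp x * derOp d ^ (i+1))
          = mulOp (d x) * derOp d ^ (i+1) + mulOp x * derOp d ^ (i+1+1) := by
        rw [← mul_assoc, der_mulOp d hd x, add_mul, mul_assoc, ← pow_succ']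
      have e3 : derOp d * (mulOp (((i+1 : ℕ) : F) * d x) * derOp d ^ i)
          = mulOp (d (((i+1 : ℕ) : F) * d x)) * derOp d ^ i
            + mulOp (((i+1 : ℕ) : F) * d x) * derOp d ^ (i+1) := by
        rw [← mul_assoc, der_mulOp d hd _, add_mul, mul_assoc, ← pow_succ']
      have e4 : mulOp (((i+1+1 : ℕ) : F) * d x)
          = mulOp (d x) + mulOp (((i+1 : ℕ) : F) * d x) := by
        rw [← mulOp_add]; congr 1; push_cast; ring
      rw [End_mul_sub, End_mul_sub, e1, e2, e3, e4, add_mul]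
      abel
    rw [key]
    exact add_mem (der_mul_mem_lt hd ih) (mem_OpLT_of_lt (Nat.lt_succ_self i))

lemma indep [CharZero F] (hd : IsDeriv d) {x : F} (hx : d x ≠ 0) :
    ∀ m, ∀ f : ℕ → F, (∑ i ∈ Finset.range m, mulOp (f i) * derOp d ^ i) = 0 →
      ∀ i < m, f i = 0 := by
  intro m
  induction m using Nat.strong_induction_on with
  | _ m IH =>
  rcases m with _ | _ | k
  · intro f _ i hi; exact absurd hi (Nat.not_lt_zero i)
  · intro f hf i hi
    have hi0 : i = 0 := by omega
    subst hi0
    have h1 : mulOp (f 0) = 0 := by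
      rw [Finset.sum_range_one, pow_zero, mul_one] at hf; exact hf
    have := congrArg (fun P : AddMonoid.End F => P 1) h1
    simpa [mulOp_apply] using this
  · intro f hf
    have hδ : ∑ i ∈ Finset.range (k+2),
        mulOp (f i) * (derOp d ^ i * mulOp x - mulOp x * derOp d ^ i) = 0 := by
      have h0 : (∑ i ∈ Finset.range (k+2), mulOp (f i) * derOp d ^ i) * mulOp x
          - mulOp x * (∑ i ∈ Finset.range (k+2), mulOp (f i) * derOp d ^ i) = 0 := by
        rw [hf, zero_mul, mul_zero, sub_zero]
      rw [Finset.sum_mul, Finset.mul_sum, ← Finset.sum_sub_distrib] at h0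
      rw [← h0]
      refine Finset.sum_congr rfl fun i _ => ?_
      rw [End_mul_sub, mul_assoc]
      congr 1
      rw [← mul_assoc, ← mul_assoc, mulOp_comm x (f i)]
    have hδ2 : ∑ j ∈ Finset.range (k+1),
        mulOp (f (j+1)) * (derOp d ^ (j+1) * mulOp x - mulOp x * derOp d ^ (j+1)) = 0 := by
      rw [Finset.sum_range_succ'] at hδ
      simpa using hδ
    have hW : ∑ j ∈ Finset.range (k+1),
        mulOp (f (j+1)) * (derOp d ^ (j+1) * mulOp x - mulOp x * derOp d ^ (j+1)
          - mulOp (((j+1 : ℕ) : F) * d x) * derOp d ^ j) ∈ OpLT d k := by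
      apply sum_mem
      intro j hj
      apply mulOp_mul_mem_lt
      exact OpLT_mono (by have := Finset.mem_range.1 hj; omega) (K_lemma hd x j)
    obtain ⟨w, hw⟩ := exists_rep_lt hW
    have hcomb : ∑ j ∈ Finset.range (k+1),
        mulOp ((f (j+1) * (((j+1 : ℕ) : F) * d x)) + (if j < k then w j else 0))
          * derOp d ^ j = 0 := by
      have expand : ∀ j, mulOp ((f (j+1) * (((j+1 : ℕ) : F) * d x)) + (if j < k then w j else 0))
            * derOp d ^ j
          = mulOp (f (j+1) * (((j+1 : ℕ) : F) * d x)) * derOp d ^ j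
            + mulOp (if j < k then w j else 0) * derOp d ^ j := by
        intro j; rw [mulOp_add, add_mul]
      rw [Finset.sum_congr rfl (fun j _ => expand j), Finset.sum_add_distrib]
      have hid : ∑ j ∈ Finset.range (k+1), mulOp (if j < k then w j else 0) * derOp d ^ j
          = ∑ j ∈ Finset.range k, mulOp (w j) * derOp d ^ j := by
        rw [Finset.sum_range_succ, if_neg (lt_irrefl k), mulOp_zero, zero_mul, add_zero]
        exact Finset.sum_congr rfl fun j hj => by rw [if_pos (Finset.mem_range.1 hj)]
      rw [hid, ← hw, ← hδ2, ← Finset.sum_add_distrib]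
      refine Finset.sum_congr rfl fun j _ => ?_
      have e : mulOp (f (j+1)) * (mulOp ((((j+1):ℕ):F) * d x) * derOp d ^ j)
          = mulOp (f (j+1) * ((((j+1):ℕ):F) * d x)) * derOp d ^ j := by
        rw [mulOp_mul (f (j+1)) ((((j+1):ℕ):F) * d x), mul_assoc]
      rw [End_mul_sub, e]
      abel
    have htop := IH (k+1) (by omega) _ hcomb
    have hfk : f (k+1) = 0 := by
      have h2 := htop k (by omega)
      rw [if_neg (lt_irrefl k), add_zero] at h2
      rcases mul_eq_zero.1 h2 with h | h
      · exact h
      · exfalso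
        rcases mul_eq_zero.1 h with h' | h'
        · exact (Nat.cast_ne_zero (R := F)).2 (by omega : k + 1 ≠ 0) h'
        · exact hx h'
    have hf' : ∑ i ∈ Finset.range (k+1), mulOp (f i) * derOp d ^ i = 0 := by
      rw [Finset.sum_range_succ, hfk, mulOp_zero, zero_mul, add_zero] at hf
      exact hf
    have hrest := IH (k+1) (by omega) f hf'
    intro i hi
    rcases Nat.lt_succ_iff_lt_or_eq.1 hi with h | h
    · exact hrest i h
    · rw [h]; exact hfk

lemma single_coeff [CharZero F] (hd : IsDeriv d) {x : F} (hx : d x ≠ 0) {a : F} {k : ℕ}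
    (h : mulOp a * derOp d ^ k ∈ OpLT d k) : a = 0 := by
  obtain ⟨w, hw⟩ := exists_rep_lt h
  have h0 : ∑ j ∈ Finset.range (k+1), mulOp (if j = k then a else -w j) * derOp d ^ j = 0 := by
    rw [Finset.sum_range_succ, if_pos rfl]
    have h1 : ∑ j ∈ Finset.range k, mulOp (if j = k then a else -w j) * derOp d ^ j
        = -∑ j ∈ Finset.range k, mulOp (w j) * derOp d ^ j := by
      rw [← Finset.sum_neg_distrib]
      refine Finset.sum_congr rfl fun j hj => ?_
      rw [if_neg (by have := Finset.mem_range.1 hj; omega), mulOp_neg, End_neg_mul]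
    rw [h1, ← hw]
    abel
  have h2 := indep hd hx (k+1) _ h0 k (by omega)
  rwa [if_pos rfl] at h2

end Aux2
section Aux3

variable {F : Type} [Field F] {d : F →+ F}

lemma lead_mul (hd : IsDeriv d) {P Q : AddMonoid.End F} {a b : F} {p q : ℕ}
    (hP : P - mulOp a * derOp d ^ p ∈ OpLT d p)
    (hQ : Q - mulOp b * derOp d ^ q ∈ OpLT d q) :
    P * Q - mulOp (a*b) * derOp d ^ (p+q) ∈ OpLT d (p+q) := by
  have hQ' : Q ∈ OpLE d q := by
    have h1 := (OpLT_le_OpLE q) hQ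
    have h2 : Q = (Q - mulOp b * derOp d ^ q) + mulOp b * derOp d ^ q := by abel
    rw [h2]; exact add_mem h1 (mem_OpLE_of_le le_rfl)
  have decomp : P * Q - mulOp (a*b) * derOp d ^ (p+q)
      = (P - mulOp a * derOp d ^ p) * Q
        + (mulOp a * derOp d ^ p) * (Q - mulOp b * derOp d ^ q)
        + mulOp a * ((derOp d ^ p * mulOp b - mulOp b * derOp d ^ p) * derOp d ^ q) := by
    rw [mulOp_mul a b, pow_add]
    simp only [End_sub_mul, End_mul_sub, mul_assoc]
    abel
  rw [decomp]
  refine add_mem (add_mem ?_ ?_) ?_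
  · exact mul_mem_lt_left hd hP hQ'
  · exact mul_mem_lt_right hd (mem_OpLE_of_le le_rfl) hQ
  · exact mulOp_mul_mem_lt a (mul_mem_lt_left hd (pow_comm_mulOp hd b p) (pow_mem_OpLE le_rfl))

lemma L_pow_mem (hd : IsDeriv d) {L : AddMonoid.End F} {n : ℕ} (hLn : L ∈ OpLE d n) :
    ∀ j, L ^ j ∈ OpLE d (n * j) := by
  intro j
  induction j with
  | zero =>
    have h1 := pow_mem_OpLE (d := d) (i := 0) (m := 0) le_rfl
    rw [pow_zero] at h1
    rw [pow_zero, Nat.mul_zero]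
    exact h1
  | succ j ih =>
    rw [pow_succ, show n*(j+1) = n*j + n by ring]
    exact mul_mem_le hd ih hLn

lemma L_pow_lead (hd : IsDeriv d) {L : AddMonoid.End F} {n : ℕ} (hn : 1 ≤ n)
    (hL : MonicOrd d L n) : ∀ e, L ^ e - derOp d ^ (n * e) ∈ OpLT d (n * e) := by
  have hEQ : OpLE d (n-1) = OpLT d (n-1+1) := (OpLT_succ _).symm
  rw [show n-1+1 = n by omega] at hEQ
  have hLlt : L - mulOp 1 * derOp d ^ n ∈ OpLT d n := by
    rw [mulOp_one, one_mul, ← hEQ]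
    exact hL.2
  intro e
  induction e with
  | zero => rw [pow_zero, Nat.mul_zero, pow_zero, sub_self]; exact zero_mem _
  | succ e ih =>
    have h2 : L ^ e - mulOp 1 * derOp d ^ (n*e) ∈ OpLT d (n*e) := by
      rw [mulOp_one, one_mul]; exact ih
    have h3 := lead_mul hd h2 hLlt
    rw [show (1:F)*1 = 1 by ring, mulOp_one, one_mul] at h3
    rw [pow_succ, show n*(e+1) = n*e + n by ring]
    exact h3

lemma cpoly_lead (hd : IsDeriv d) {L : AddMonoid.End F} {n : ℕ} (hn : 1 ≤ n)
    (hL : MonicOrd d L n) {c : AddMonoid.End F} (hc : c ∈ CPoly d L) (hc0 : c ≠ 0) :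
    ∃ (a : F) (M : ℕ), a ≠ 0 ∧ (M : ZMod n) = 0 ∧ c - mulOp a * derOp d ^ M ∈ OpLT d M := by
  obtain ⟨p, hpd, hcp⟩ := hc
  set D := p.natDegree with hD
  set s' : Finset ℕ := (Finset.range (D+1)).filter (fun j => p.coeff j ≠ 0) with hs'
  have hne : s'.Nonempty := by
    by_contra hemp
    rw [Finset.not_nonempty_iff_eq_empty] at hemp
    apply hc0
    rw [hcp]
    apply Finset.sum_eq_zero
    intro j hj
    have hj0 : p.coeff j = 0 := by
      by_contra hne0
      have hmem : j ∈ s' := Finset.mem_filter.2 ⟨hj, hne0⟩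
      rw [hemp] at hmem
      exact absurd hmem (Finset.notMem_empty j)
    rw [hj0, mulOp_zero, zero_mul]
  set e := s'.max' hne with he
  have hes : e ∈ s' := s'.max'_mem hne
  have heD : e ≤ D := by
    have := Finset.mem_range.1 (Finset.mem_filter.1 hes).1
    omega
  have hce : p.coeff e ≠ 0 := (Finset.mem_filter.1 hes).2
  have hsum : c = ∑ j ∈ Finset.range (e+1), mulOp (p.coeff j) * L ^ j := by
    rw [hcp]
    refine (Finset.sum_subset (Finset.range_subset_range.2 (by omega)) (fun j hj hjn => ?_)).symm
    have hej : e < j := by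
      have h1 := Finset.mem_range.1 hj
      have h2 : ¬ j < e + 1 := fun hlt => hjn (Finset.mem_range.2 hlt)
      omega
    have hj0 : p.coeff j = 0 := by
      by_contra hne0
      have hmem : j ∈ s' := Finset.mem_filter.2 ⟨hj, hne0⟩
      have := s'.le_max' j hmem
      omega
    rw [hj0, mulOp_zero, zero_mul]
  refine ⟨p.coeff e, n * e, hce, ?_, ?_⟩
  · rw [Nat.cast_mul, ZMod.natCast_self, zero_mul]
  · rw [hsum, Finset.sum_range_succ]
    have key : (∑ j ∈ Finset.range e, mulOp (p.coeff j) * L ^ j) + mulOp (p.coeff e) * L ^ e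
        - mulOp (p.coeff e) * derOp d ^ (n*e)
        = (∑ j ∈ Finset.range e, mulOp (p.coeff j) * L ^ j)
          + mulOp (p.coeff e) * (L ^ e - derOp d ^ (n*e)) := by
      rw [End_mul_sub]; abel
    rw [key]
    refine add_mem (sum_mem fun j hj => ?_) (mulOp_mul_mem_lt _ (L_pow_lead hd hn hL e))
    have hje : j < e := Finset.mem_range.1 hj
    have hLj : mulOp (p.coeff j) * L ^ j ∈ OpLE d (n*j) :=
      mulOp_mul_mem_le _ (L_pow_mem hd hL.1.1 j)
    have hlt : n*j + 1 ≤ n*e := by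
      calc n*j + 1 ≤ n*j + n := by omega
        _ = n*(j+1) := by ring
        _ ≤ n*e := Nat.mul_le_mul le_rfl (by omega)
    refine OpLT_mono hlt ?_
    rw [OpLT_succ]
    exact hLj

lemma hasOrd_lead {Q : AddMonoid.End F} {m : ℕ} (hQ : HasOrd d Q m) (hQ0 : Q ≠ 0) :
    ∃ b : F, b ≠ 0 ∧ Q - mulOp b * derOp d ^ m ∈ OpLT d m := by
  obtain ⟨f, hf⟩ := exists_rep_le hQ.1
  refine ⟨f m, ?_, ?_⟩
  · intro hb0
    have hQe : Q = ∑ j ∈ Finset.range m, mulOp (f j) * derOp d ^ j := by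
      rw [hf, Finset.sum_range_succ, hb0, mulOp_zero, zero_mul, add_zero]
    cases m with
    | zero => apply hQ0; rw [hQe]; simp
    | succ t =>
      have hmem : Q ∈ OpLE d t := by
        rw [hQe]
        exact sum_mem fun j hj => mem_OpLE_of_le (by
          have := Finset.mem_range.1 hj; omega)
      have := hQ.2 t hmem
      omega
  · rw [hf, Finset.sum_range_succ]
    have h1 : (∑ j ∈ Finset.range m, mulOp (f j) * derOp d ^ j) + mulOp (f m) * derOp d ^ m
        - mulOp (f m) * derOp d ^ m = ∑ j ∈ Finset.range m, mulOp (f j) * derOp d ^ j := by abel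
    rw [h1]
    exact sum_mem fun j hj => mem_OpLT_of_lt (Finset.mem_range.1 hj)

lemma exists_dx {L : AddMonoid.End F} {n : ℕ} (hn : 1 ≤ n) (hL : MonicOrd d L n) :
    ∃ x : F, d x ≠ 0 := by
  by_contra h
  push_neg at h
  have hd0 : derOp d = 0 := by
    apply AddMonoidHom.ext; intro y
    exact h y
  have hle : OpLE d n ≤ OpLE d 0 := by
    apply (AddSubgroup.closure_le _).2
    rintro P ⟨a, i, hi, rfl⟩
    cases i with
    | zero => exact AddSubgroup.subset_closure ⟨a, 0, le_rfl, rfl⟩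
    | succ i =>
      rw [hd0, zero_pow (Nat.succ_ne_zero i), mul_zero]
      exact zero_mem _
  have := hL.1.2 0 (hle hL.1.1)
  omega

lemma zero_mem_CPoly (L : AddMonoid.End F) : (0 : AddMonoid.End F) ∈ CPoly d L := by
  refine ⟨0, ?_, ?_⟩
  · intro k
    rw [Polynomial.coeff_zero]
    exact d.map_zero
  · simp [mulOp_zero]

end Aux3

/-- A finite family of elements of `Z(L) \\ C[L]` whose orders are pairwise
incongruent modulo `n` is linearly independent over `C[L]`. -/
theorem cent_linear_independent_mod_n {F : Type} [Field F] [CharZero F]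
    (d : F →+ F) (hd : IsDeriv d) (L : AddMonoid.End F) (n : ℕ) (hn : 1 ≤ n)
    (hL : MonicOrd d L n) (ℓ : ℕ) (G : Fin ℓ → AddMonoid.End F) (o : Fin ℓ → ℕ)
    (hG : ∀ i, G i ∈ Cent d L) (hGn : ∀ i, G i ∉ CPoly d L)
    (ho : ∀ i, HasOrd d (G i) (o i))
    (hmod : ∀ i j, i ≠ j → ((o i : ZMod n) ≠ (o j : ZMod n))) :
    ∀ c : Fin ℓ → AddMonoid.End F, (∀ i, c i ∈ CPoly d L) →
      ∑ i, c i * G i = 0 → ∀ i, c i = 0 := by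
  intro c hc hsum i0
  by_contra hci0
  obtain ⟨x, hx⟩ := exists_dx hn hL
  set s : Finset (Fin ℓ) := Finset.univ.filter (fun j => c j ≠ 0) with hs
  have hi0s : i0 ∈ s := Finset.mem_filter.2 ⟨Finset.mem_univ _, hci0⟩
  have hG0 : ∀ j, G j ≠ 0 := fun j h0 => hGn j (h0 ▸ zero_mem_CPoly L)
  have H : ∀ j : Fin ℓ, ∃ (u : F) (r : ℕ), c j ≠ 0 →
      (u ≠ 0 ∧ (r : ZMod n) = (o j : ZMod n) ∧
        c j * G j - mulOp u * derOp d ^ r ∈ OpLT d r) := by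
    intro j
    by_cases hcj : c j = 0
    · exact ⟨0, 0, fun h => absurd hcj h⟩
    · obtain ⟨a, M, ha, hM, hcm⟩ := cpoly_lead hd hn hL (hc j) hcj
      obtain ⟨b, hb, hgb⟩ := hasOrd_lead (ho j) (hG0 j)
      refine ⟨a * b, M + o j, fun _ => ⟨mul_ne_zero ha hb, ?_, lead_mul hd hcm hgb⟩⟩
      push_cast
      rw [hM, zero_add]
  choose u r hur using H
  obtain ⟨im, him, hmax⟩ := Finset.exists_max_image s r ⟨i0, hi0s⟩
  have hcim : c im ≠ 0 := (Finset.mem_filter.1 him).2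
  obtain ⟨hu0, humod, humem⟩ := hur im hcim
  have hrlt : ∀ j ∈ s, j ≠ im → r j < r im := by
    intro j hj hne
    have hcj : c j ≠ 0 := (Finset.mem_filter.1 hj).2
    obtain ⟨_, hjmod, _⟩ := hur j hcj
    rcases lt_or_eq_of_le (hmax j hj) with h | h
    · exact h
    · exfalso
      exact hmod j im hne (by rw [← hjmod, ← humod, h])
  have hsum_s : ∑ j ∈ s, c j * G j = 0 := by
    rw [← hsum]
    exact Finset.sum_subset (Finset.subset_univ s) (fun j _ hj => by
      have hc0 : c j = 0 := by
        by_contra h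
        exact hj (Finset.mem_filter.2 ⟨Finset.mem_univ _, h⟩)
      rw [hc0, zero_mul])
  have hmem : mulOp (u im) * derOp d ^ (r im) ∈ OpLT d (r im) := by
    have hdecomp : mulOp (u im) * derOp d ^ (r im)
        = (∑ j ∈ s, c j * G j)
          - (∑ j ∈ s.erase im, mulOp (u j) * derOp d ^ (r j))
          - ∑ j ∈ s, (c j * G j - mulOp (u j) * derOp d ^ (r j)) := by
      rw [Finset.sum_sub_distrib]
      have hadd := Finset.add_sum_erase s (fun j => mulOp (u j) * derOp d ^ (r j)) him
      rw [← hadd]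
      abel
    rw [hdecomp, hsum_s]
    refine sub_mem (sub_mem (zero_mem _) (sum_mem fun j hj => ?_)) (sum_mem fun j hj => ?_)
    · exact mem_OpLT_of_lt (hrlt j (Finset.mem_of_mem_erase hj) (Finset.ne_of_mem_erase hj))
    · have hcj : c j ≠ 0 := (Finset.mem_filter.1 hj).2
      obtain ⟨_, _, hmem'⟩ := hur j hcj
      exact OpLT_mono (hmax j hj) hmem'
  exact hu0 (single_coeff hd hx hmem)
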